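/- Let S be a finite nonempty set, c a cost function, and R ⊆ S. Suppose c_{pq} ≤ 0 for all {p,q} ∈ binom(R,2), c_{pqr} ≤ 0 for all {p,q,r} ∈ binom(R,3), and max{ Σ_{{p,q,r}∈T_{δ(R')}∩binom(R,3)} c_{pqr} + Σ_{{p,q}∈δ(R', R∖R')} c_{pq} : R' ⊂ R nonempty and proper } ≤ Σ_{{p,q,r}∈T_{δ(R)}∩T^−} c_{pqr} + Σ_{{p,q}∈δ(R)∩P^−} c_{pq}. Then there exists an optimal solution x* of min_{x∈X_S} φ_c(x) such that x*_{ij} = 1 for all {i,j} ∈ binom(R,2). -/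
import Mathlib


open Finset

/-- `binom(S,2)`: the set of 2-element subsets (unordered pairs) of the ground set. -/
def pairs (V : Type*) [Fintype V] [DecidableEq V] : Finset (Finset V) :=
  (univ : Finset V).powersetCard 2

/-- `binom(S,3)`: the set of 3-element subsets (unordered triples) of the ground set. -/
def triples (V : Type*) [Fintype V] [DecidableEq V] : Finset (Finset V) :=
  (univ : Finset V).powersetCard 3

/-- The feasible set `X_S`: maps `x : binom(S,2) → {0,1}` satisfying the triangle
inequalities `x_{pq} + x_{qr} - x_{pr} ≤ 1` for all pairwise distinct `p, q, r`. -/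
def feasible {V : Type*} [Fintype V] [DecidableEq V] (x : Finset V → ℝ) : Prop :=
  (∀ e ∈ pairs V, x e = 0 ∨ x e = 1) ∧
    ∀ p q r : V, p ≠ q → q ≠ r → p ≠ r →
      x {p, q} + x {q, r} - x {p, r} ≤ 1

/-- The cubic objective
`φ_c(x) = Σ_{{p,q,r}} c_{pqr} x_{pq} x_{pr} x_{qr} + Σ_{{p,q}} c_{pq} x_{pq} + c_∅`. -/
def obj {V : Type*} [Fintype V] [DecidableEq V] (c x : Finset V → ℝ) : ℝ :=
  ∑ t ∈ triples V, c t * ∏ e ∈ t.powersetCard 2, x e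
    + ∑ e ∈ pairs V, c e * x e + c ∅

/-- `δ(R)`: the pairs having exactly one element in `R`. -/
def cut {V : Type*} [Fintype V] [DecidableEq V] (R : Finset V) : Finset (Finset V) :=
  (pairs V).filter fun e => (e ∩ R).card = 1

/-- `T_{P'}`: the triples having some 2-element subset in `P'`. -/
def Tof {V : Type*} [Fintype V] [DecidableEq V] (P' : Finset (Finset V)) :
    Finset (Finset V) :=
  (triples V).filter fun t => ∃ e ∈ t.powersetCard 2, e ∈ P'

/-- `δ(A, B)`: the pairs `{p,q}` with `p ∈ A` and `q ∈ B`. -/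
def delta2 {V : Type*} [Fintype V] [DecidableEq V] (A B : Finset V) : Finset (Finset V) :=
  (pairs V).filter fun e => ∃ p ∈ A, ∃ q ∈ B, e = ({p, q} : Finset V)

section Aux
variable {V : Type*} [Fintype V] [DecidableEq V]

lemma mem_pairs_iff {e : Finset V} : e ∈ pairs V ↔ e.card = 2 := by
  simp [pairs, Finset.mem_powersetCard, Finset.subset_univ]

lemma mem_triples_iff {t : Finset V} : t ∈ triples V ↔ t.card = 3 := by
  simp [triples, Finset.mem_powersetCard, Finset.subset_univ]

lemma pair_mem_pairs {p q : V} (h : p ≠ q) : ({p, q} : Finset V) ∈ pairs V :=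
  mem_pairs_iff.mpr (card_pair h)

lemma sub_pair_mem_pairs {t e : Finset V} (he : e ∈ t.powersetCard 2) :
    e ∈ pairs V := by
  rw [mem_pairs_iff]
  exact (Finset.mem_powersetCard.mp he).2

lemma obj_congr {c x y : Finset V → ℝ} (h : ∀ e ∈ pairs V, x e = y e) :
    obj c x = obj c y := by
  unfold obj
  congr 2
  · exact Finset.sum_congr rfl fun t ht => by
      rw [Finset.prod_congr rfl fun e he => h e (sub_pair_mem_pairs he)]
  · exact Finset.sum_congr rfl fun e he => by rw [h e he]

lemma feasible_congr {x y : Finset V → ℝ} (hx : feasible x) (h : ∀ e ∈ pairs V, x e = y e) :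
    feasible y := by
  refine ⟨fun e he => (h e he) ▸ hx.1 e he, fun p q r hpq hqr hpr => ?_⟩
  rw [← h _ (pair_mem_pairs hpq), ← h _ (pair_mem_pairs hqr), ← h _ (pair_mem_pairs hpr)]
  exact hx.2 p q r hpq hqr hpr

lemma exists_opt (c : Finset V → ℝ) :
    ∃ x : Finset V → ℝ, feasible x ∧ ∀ y, feasible y → obj c x ≤ obj c y := by
  classical
  set ind : Finset (Finset V) → Finset V → ℝ := fun P e => if e ∈ P then 1 else 0 with hind
  set F : Finset (Finset (Finset V)) :=
    ((pairs V).powerset).filter (fun P => feasible (ind P)) with hF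
  have hne : F.Nonempty := by
    refine ⟨∅, ?_⟩
    rw [hF, Finset.mem_filter]
    constructor
    · exact Finset.empty_mem_powerset _
    · constructor
      · intro e _; left; simp [ind]
      · intro p q r _ _ _; simp [ind]
  obtain ⟨P0, hP0F, hP0min⟩ := F.exists_min_image (fun P => obj c (ind P)) hne
  refine ⟨ind P0, (Finset.mem_filter.mp hP0F).2, fun y hy => ?_⟩
  set P : Finset (Finset V) := (pairs V).filter (fun e => y e = 1) with hP
  have hagree : ∀ e ∈ pairs V, y e = ind P e := by
    intro e he
    rcases hy.1 e he with h0 | h1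
    · rw [h0]; simp only [ind, hP, Finset.mem_filter]
      rw [if_neg]; rintro ⟨-, h1⟩; rw [h0] at h1; norm_num at h1
    · rw [h1]; simp only [ind, hP, Finset.mem_filter]
      rw [if_pos ⟨he, h1⟩]
  have hPF : P ∈ F := by
    rw [hF, Finset.mem_filter]
    exact ⟨Finset.mem_powerset.mpr (Finset.filter_subset _ _),
      feasible_congr hy fun e he => (hagree e he).symm ▸ rfl⟩
  calc obj c (ind P0) ≤ obj c (ind P) := hP0min P hPF
    _ = obj c y := (obj_congr fun e he => (hagree e he).symm)

end Aux

/--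
Let `S` be a finite nonempty set, `c` a cost function, and `R ⊆ S`.
Suppose `c_{pq} ≤ 0` for all `{p,q} ∈ binom(R,2)`, `c_{pqr} ≤ 0` for all
`{p,q,r} ∈ binom(R,3)`, and
`max{ Σ_{T_{δ(R')} ∩ binom(R,3)} c_{pqr} + Σ_{δ(R', R∖R')} c_{pq} : ∅ ≠ R' ⊊ R }
  ≤ Σ_{T_{δ(R)} ∩ T⁻} c_{pqr} + Σ_{δ(R) ∩ P⁻} c_{pq}`.
Then there exists an optimal solution `x*` of `min_{x ∈ X_S} φ_c(x)` such that
`x*_{ij} = 1` for all `{i,j} ∈ binom(R,2)`.  (The bound on the maximum is stated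
equivalently by quantifying over all nonempty proper subsets `R'` of `R`.)
-/
theorem subset_join_corollary {V : Type*} [Fintype V] [DecidableEq V] [Nonempty V]
    (c : Finset V → ℝ) (R : Finset V)
    (hpair : ∀ e ∈ R.powersetCard 2, c e ≤ 0)
    (htriple : ∀ t ∈ R.powersetCard 3, c t ≤ 0)
    (h : ∀ R' : Finset V, R' ⊆ R → R'.Nonempty → R' ≠ R →
        ∑ t ∈ Tof (cut R') ∩ R.powersetCard 3, c t
            + ∑ e ∈ delta2 R' (R \ R'), c e
          ≤ ∑ t ∈ (Tof (cut R)).filter (fun t => c t < 0), c t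
            + ∑ e ∈ (cut R).filter (fun e => c e < 0), c e) :
    ∃ xstar : Finset V → ℝ, feasible xstar ∧
      (∀ x : Finset V → ℝ, feasible x → obj c xstar ≤ obj c x) ∧
      ∀ e ∈ R.powersetCard 2, xstar e = 1 := by
  classical
  obtain ⟨x0, hx0, hopt⟩ := exists_opt c
  by_cases hall : ∀ e ∈ R.powersetCard 2, x0 e = 1
  · exact ⟨x0, hx0, hopt, hall⟩
  push_neg at hall
  obtain ⟨e0, he0R, he0ne1⟩ := hall
  obtain ⟨he0sub, he0card⟩ := Finset.mem_powersetCard.mp he0R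
  have he0p : e0 ∈ pairs V := mem_pairs_iff.mpr he0card
  have hx0e0 : x0 e0 = 0 := (hx0.1 e0 he0p).resolve_right he0ne1
  obtain ⟨p0, q0, hp0q0, he0⟩ := Finset.card_eq_two.mp he0card
  have hp0R : p0 ∈ R := he0sub (by rw [he0]; exact mem_insert_self _ _)
  have hq0R : q0 ∈ R := he0sub (by rw [he0]; exact mem_insert_of_mem (mem_singleton_self _))
  -- transitivity of x0
  have htrans : ∀ a b d : V, a ≠ b → b ≠ d → a ≠ d →
      x0 {a, b} = 1 → x0 {b, d} = 1 → x0 {a, d} = 1 := by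
    intro a b d hab hbd had h1 h2
    rcases hx0.1 _ (pair_mem_pairs had) with h0 | h1'
    · have := hx0.2 a b d hab hbd had
      rw [h1, h2, h0] at this; linarith
    · exact h1'
  set R' : Finset V := R.filter (fun r => r = p0 ∨ x0 {p0, r} = 1) with hR'
  have hp0R' : p0 ∈ R' := Finset.mem_filter.mpr ⟨hp0R, Or.inl rfl⟩
  have hq0R' : q0 ∉ R' := by
    intro hq
    rcases (Finset.mem_filter.mp hq).2 with h1 | h2
    · exact hp0q0 h1.symm
    · rw [← he0] at h2; rw [hx0e0] at h2; norm_num at h2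
  have hR'sub : R' ⊆ R := Finset.filter_subset _ _
  have hR'nonempty : R'.Nonempty := ⟨p0, hp0R'⟩
  have hR'neR : R' ≠ R := fun hEq => hq0R' (hEq ▸ hq0R)
  -- key property: edges between R' and R \ R' are 0
  have key : ∀ a ∈ R', ∀ b ∈ R, b ∉ R' → x0 {a, b} = 0 := by
    intro a ha b hbR hbR'
    have hab : a ≠ b := fun hEq => hbR' (hEq ▸ ha)
    rcases hx0.1 _ (pair_mem_pairs hab) with h0 | h1
    · exact h0
    exfalso
    rcases (Finset.mem_filter.mp ha).2 with hap | hpa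
    · subst hap
      exact hbR' (Finset.mem_filter.mpr ⟨hbR, Or.inr h1⟩)
    · by_cases hp0a : p0 = a
      · subst hp0a
        exact hbR' (Finset.mem_filter.mpr ⟨hbR, Or.inr h1⟩)
      · have hp0b : p0 ≠ b := by
          intro hEq; subst hEq
          exact hbR' hp0R'
        have := htrans p0 a b hp0a hab hp0b hpa h1
        exact hbR' (Finset.mem_filter.mpr ⟨hbR, Or.inr this⟩)
  -- the modified solution
  set x' : Finset V → ℝ :=
    fun e => if e ⊆ R then 1 else if (e ∩ R).Nonempty then 0 else x0 e with hx'def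
  have hx'R : ∀ e : Finset V, e ⊆ R → x' e = 1 := fun e he => if_pos he
  have hx'cut : ∀ e : Finset V, ¬ e ⊆ R → (e ∩ R).Nonempty → x' e = 0 := by
    intro e h1 h2; rw [hx'def]; simp only [if_neg h1, if_pos h2]
  have hx'out : ∀ e : Finset V, e ∩ R = ∅ → e.Nonempty → x' e = x0 e := by
    intro e h1 h2
    have hns : ¬ e ⊆ R := by
      intro hsub
      obtain ⟨a, ha⟩ := h2
      have : a ∈ e ∩ R := Finset.mem_inter.mpr ⟨ha, hsub ha⟩
      rw [h1] at this; exact absurd this (Finset.notMem_empty a)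
    rw [hx'def]; simp only [if_neg hns, h1]
    rw [if_neg (by simp)]
  have hx'01 : ∀ e ∈ pairs V, x' e = 0 ∨ x' e = 1 := by
    intro e he
    by_cases h1 : e ⊆ R
    · right; exact hx'R e h1
    by_cases h2 : (e ∩ R).Nonempty
    · left; exact hx'cut e h1 h2
    · rw [hx'out e (Finset.not_nonempty_iff_eq_empty.mp h2)
        (Finset.card_pos.mp (by rw [mem_pairs_iff.mp he]; norm_num))]
      exact hx0.1 e he
  -- feasibility of x'
  have hfeas : feasible x' := by
    refine ⟨hx'01, ?_⟩
    intro p q r hpq hqr hpr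
    have himp : x' {p, q} = 1 → x' {q, r} = 1 → x' {p, r} = 1 := by
      intro h1 h2
      by_cases hA : ({p, q} : Finset V) ⊆ R <;> by_cases hB : ({q, r} : Finset V) ⊆ R
      · refine hx'R _ ?_
        rw [Finset.insert_subset_iff] at hA hB ⊢
        exact ⟨hA.1, by simpa using hB.2⟩
      · exfalso
        have hq : q ∈ R := hA (mem_insert_of_mem (mem_singleton_self _))
        have : x' {q, r} = 0 := hx'cut _ hB ⟨q, Finset.mem_inter.mpr ⟨mem_insert_self _ _, hq⟩⟩
        rw [this] at h2; norm_num at h2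
      · exfalso
        have hq : q ∈ R := hB (mem_insert_self _ _)
        have : x' {p, q} = 0 := hx'cut _ hA
          ⟨q, Finset.mem_inter.mpr ⟨mem_insert_of_mem (mem_singleton_self _), hq⟩⟩
        rw [this] at h1; norm_num at h1
      · have hAe : ({p, q} : Finset V) ∩ R = ∅ := by
          by_contra hc
          rw [hx'cut _ hA (Finset.nonempty_iff_ne_empty.mpr hc)] at h1; norm_num at h1
        have hBe : ({q, r} : Finset V) ∩ R = ∅ := by
          by_contra hc
          rw [hx'cut _ hB (Finset.nonempty_iff_ne_empty.mpr hc)] at h2; norm_num at h2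
        have hpR : p ∉ R := by
          intro hc
          have : p ∈ ({p, q} : Finset V) ∩ R := Finset.mem_inter.mpr ⟨mem_insert_self _ _, hc⟩
          rw [hAe] at this; exact absurd this (Finset.notMem_empty p)
        have hrR : r ∉ R := by
          intro hc
          have : r ∈ ({q, r} : Finset V) ∩ R :=
            Finset.mem_inter.mpr ⟨mem_insert_of_mem (mem_singleton_self _), hc⟩
          rw [hBe] at this; exact absurd this (Finset.notMem_empty r)
        have hCe : ({p, r} : Finset V) ∩ R = ∅ := by
          rw [Finset.eq_empty_iff_forall_notMem]
          intro a ha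
          obtain ⟨ha1, ha2⟩ := Finset.mem_inter.mp ha
          rcases Finset.mem_insert.mp ha1 with rfl | ha1
          · exact hpR ha2
          · rw [Finset.mem_singleton] at ha1; subst ha1; exact hrR ha2
        rw [hx'out _ hAe ⟨p, mem_insert_self _ _⟩] at h1
        rw [hx'out _ hBe ⟨q, mem_insert_self _ _⟩] at h2
        rw [hx'out _ hCe ⟨p, mem_insert_self _ _⟩]
        exact htrans p q r hpq hqr hpr h1 h2
    rcases hx'01 _ (pair_mem_pairs hpq) with v1 | v1 <;>
      rcases hx'01 _ (pair_mem_pairs hqr) with v2 | v2 <;>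
      rcases hx'01 _ (pair_mem_pairs hpr) with v3 | v3 <;>
      rw [v1, v2, v3] <;> try norm_num
    rw [himp v1 v2] at v3; norm_num at v3
  -- basic facts for the sums
  have hpairs01 : ∀ e ∈ pairs V, 0 ≤ x0 e ∧ x0 e ≤ 1 := by
    intro e he; rcases hx0.1 e he with h0 | h0 <;> rw [h0] <;> norm_num
  have hRp2sub : R.powersetCard 2 ⊆ pairs V := by
    intro e he
    obtain ⟨h1, h2⟩ := Finset.mem_powersetCard.mp he
    exact mem_pairs_iff.mpr h2
  have hRp3sub : R.powersetCard 3 ⊆ triples V := by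
    intro t ht
    obtain ⟨h1, h2⟩ := Finset.mem_powersetCard.mp ht
    exact mem_triples_iff.mpr h2
  have hcutsub : cut R ⊆ pairs V := Finset.filter_subset _ _
  have hTofsub : Tof (cut R) ⊆ triples V := Finset.filter_subset _ _
  -- a pair with (e ∩ R).card = 1 is not ⊆ R and meets R
  have hcutfacts : ∀ e ∈ cut R, ¬ e ⊆ R ∧ (e ∩ R).Nonempty := by
    intro e he
    obtain ⟨hep, hec⟩ := Finset.mem_filter.mp he
    refine ⟨?_, Finset.card_pos.mp (by rw [hec]; norm_num)⟩
    intro hsub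
    rw [Finset.inter_eq_left.mpr hsub] at hec
    rw [mem_pairs_iff.mp hep] at hec
    norm_num at hec
  -- pair-sum difference
  have claim2 : ∑ e ∈ pairs V, (c e * x' e - c e * x0 e)
      = ∑ e ∈ R.powersetCard 2, c e * (1 - x0 e) - ∑ e ∈ cut R, c e * x0 e := by
    have hU : R.powersetCard 2 ∪ cut R ⊆ pairs V :=
      Finset.union_subset hRp2sub hcutsub
    have hdisj : Disjoint (R.powersetCard 2) (cut R) := by
      rw [Finset.disjoint_left]
      intro e he hec
      obtain ⟨h1, h2⟩ := Finset.mem_powersetCard.mp he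
      have := (Finset.mem_filter.mp hec).2
      rw [Finset.inter_eq_left.mpr h1, h2] at this
      norm_num at this
    have hzero : ∀ e ∈ pairs V, e ∉ R.powersetCard 2 ∪ cut R →
        c e * x' e - c e * x0 e = 0 := by
      intro e he hen
      rw [Finset.mem_union, not_or] at hen
      obtain ⟨hn1, hn2⟩ := hen
      have hcard : e.card = 2 := mem_pairs_iff.mp he
      have hnsub : ¬ e ⊆ R := fun hs =>
        hn1 (Finset.mem_powersetCard.mpr ⟨hs, hcard⟩)
      have hnc : (e ∩ R).card ≠ 1 := fun hc =>
        hn2 (Finset.mem_filter.mpr ⟨he, hc⟩)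
      have hle : (e ∩ R).card ≤ 2 := hcard ▸ Finset.card_le_card Finset.inter_subset_left
      have h02 : (e ∩ R).card = 0 ∨ (e ∩ R).card = 2 := by omega
      rcases h02 with h0 | h2
      · rw [hx'out e (Finset.card_eq_zero.mp h0)
          (Finset.card_pos.mp (by rw [hcard]; norm_num))]
        ring
      · exfalso
        apply hnsub
        rw [← Finset.inter_eq_left]
        apply Finset.eq_of_subset_of_card_le Finset.inter_subset_left
        omega
    rw [← Finset.sum_subset hU hzero, Finset.sum_union hdisj]
    have e1 : ∑ e ∈ R.powersetCard 2, (c e * x' e - c e * x0 e)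
        = ∑ e ∈ R.powersetCard 2, c e * (1 - x0 e) := by
      refine Finset.sum_congr rfl fun e he => ?_
      rw [hx'R e (Finset.mem_powersetCard.mp he).1]; ring
    have e2 : ∑ e ∈ cut R, (c e * x' e - c e * x0 e)
        = ∑ e ∈ cut R, -(c e * x0 e) := by
      refine Finset.sum_congr rfl fun e he => ?_
      obtain ⟨h1, h2⟩ := hcutfacts e he
      rw [hx'cut e h1 h2]; ring
    rw [e1, e2, Finset.sum_neg_distrib]
    ring
  -- triple-sum difference
  have claim3 : ∑ t ∈ triples V,
        (c t * ∏ e ∈ t.powersetCard 2, x' e - c t * ∏ e ∈ t.powersetCard 2, x0 e)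
      = ∑ t ∈ R.powersetCard 3, c t * (1 - ∏ e ∈ t.powersetCard 2, x0 e)
        - ∑ t ∈ Tof (cut R), c t * ∏ e ∈ t.powersetCard 2, x0 e := by
    have hU : R.powersetCard 3 ∪ Tof (cut R) ⊆ triples V :=
      Finset.union_subset hRp3sub hTofsub
    have hdisj : Disjoint (R.powersetCard 3) (Tof (cut R)) := by
      rw [Finset.disjoint_left]
      intro t ht htc
      obtain ⟨h1, h2⟩ := Finset.mem_powersetCard.mp ht
      obtain ⟨e, hee, hec⟩ := (Finset.mem_filter.mp htc).2
      obtain ⟨he1, he2⟩ := Finset.mem_powersetCard.mp hee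
      have hesub : e ⊆ R := he1.trans h1
      have := (Finset.mem_filter.mp hec).2
      rw [Finset.inter_eq_left.mpr hesub, he2] at this
      norm_num at this
    have hzero : ∀ t ∈ triples V, t ∉ R.powersetCard 3 ∪ Tof (cut R) →
        c t * ∏ e ∈ t.powersetCard 2, x' e - c t * ∏ e ∈ t.powersetCard 2, x0 e = 0 := by
      intro t ht htn
      rw [Finset.mem_union, not_or] at htn
      obtain ⟨hn1, hn2⟩ := htn
      have hcard : t.card = 3 := mem_triples_iff.mp ht
      have hnsub : ¬ t ⊆ R := fun hs =>
        hn1 (Finset.mem_powersetCard.mpr ⟨hs, hcard⟩)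
      -- t ∩ R = ∅
      have hint : t ∩ R = ∅ := by
        by_contra hc
        obtain ⟨a, ha⟩ := Finset.nonempty_iff_ne_empty.mpr hc
        obtain ⟨haT, haR⟩ := Finset.mem_inter.mp ha
        obtain ⟨b, hbT, hbR⟩ : ∃ b ∈ t, b ∉ R := by
          by_contra hcc; push_neg at hcc; exact hnsub hcc
        have hab : a ≠ b := fun hEq => hbR (hEq ▸ haR)
        apply hn2
        refine Finset.mem_filter.mpr ⟨ht, ⟨{a, b}, ?_, ?_⟩⟩
        · exact Finset.mem_powersetCard.mpr
            ⟨Finset.insert_subset haT (Finset.singleton_subset_iff.mpr hbT), card_pair hab⟩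
        · refine Finset.mem_filter.mpr ⟨pair_mem_pairs hab, ?_⟩
          rw [Finset.insert_inter_of_mem haR, Finset.singleton_inter_of_notMem hbR]
          simp
      refine sub_eq_zero_of_eq ?_
      congr 1
      refine Finset.prod_congr rfl fun e he => ?_
      obtain ⟨he1, he2⟩ := Finset.mem_powersetCard.mp he
      have : e ∩ R = ∅ := Finset.subset_empty.mp
        (hint ▸ Finset.inter_subset_inter he1 (Finset.Subset.refl R))
      exact hx'out e this (Finset.card_pos.mp (by rw [he2]; norm_num))
    rw [← Finset.sum_subset hU hzero, Finset.sum_union hdisj]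
    have e1 : ∑ t ∈ R.powersetCard 3,
          (c t * ∏ e ∈ t.powersetCard 2, x' e - c t * ∏ e ∈ t.powersetCard 2, x0 e)
        = ∑ t ∈ R.powersetCard 3, c t * (1 - ∏ e ∈ t.powersetCard 2, x0 e) := by
      refine Finset.sum_congr rfl fun t ht => ?_
      have hall1 : ∏ e ∈ t.powersetCard 2, x' e = 1 := by
        refine Finset.prod_eq_one fun e he => ?_
        exact hx'R e ((Finset.mem_powersetCard.mp he).1.trans (Finset.mem_powersetCard.mp ht).1)
      rw [hall1]; ring
    have e2 : ∑ t ∈ Tof (cut R),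
          (c t * ∏ e ∈ t.powersetCard 2, x' e - c t * ∏ e ∈ t.powersetCard 2, x0 e)
        = ∑ t ∈ Tof (cut R), -(c t * ∏ e ∈ t.powersetCard 2, x0 e) := by
      refine Finset.sum_congr rfl fun t ht => ?_
      obtain ⟨e, hee, hec⟩ := (Finset.mem_filter.mp ht).2
      obtain ⟨h1, h2⟩ := hcutfacts e hec
      have : ∏ e ∈ t.powersetCard 2, x' e = 0 :=
        Finset.prod_eq_zero hee (hx'cut e h1 h2)
      rw [this]; ring
    rw [e1, e2, Finset.sum_neg_distrib]
    ring
  -- lower bounds on the removed cut contributions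
  have hB1 : ∑ e ∈ (cut R).filter (fun e => c e < 0), c e ≤ ∑ e ∈ cut R, c e * x0 e := by
    rw [Finset.sum_filter]
    refine Finset.sum_le_sum fun e he => ?_
    obtain ⟨h0, h1⟩ := hpairs01 e (hcutsub he)
    by_cases hc : c e < 0
    · rw [if_pos hc]; nlinarith
    · rw [if_neg hc]; push_neg at hc; nlinarith
  have hprod01 : ∀ t ∈ triples V, 0 ≤ ∏ e ∈ t.powersetCard 2, x0 e ∧
      ∏ e ∈ t.powersetCard 2, x0 e ≤ 1 := by
    intro t ht
    constructor
    · exact Finset.prod_nonneg fun e he => (hpairs01 e (sub_pair_mem_pairs he)).1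
    · exact Finset.prod_le_one (fun e he => (hpairs01 e (sub_pair_mem_pairs he)).1)
        (fun e he => (hpairs01 e (sub_pair_mem_pairs he)).2)
  have hB2 : ∑ t ∈ (Tof (cut R)).filter (fun t => c t < 0), c t
      ≤ ∑ t ∈ Tof (cut R), c t * ∏ e ∈ t.powersetCard 2, x0 e := by
    rw [Finset.sum_filter]
    refine Finset.sum_le_sum fun t ht => ?_
    obtain ⟨h0, h1⟩ := hprod01 t (hTofsub ht)
    by_cases hc : c t < 0
    · rw [if_pos hc]; nlinarith
    · rw [if_neg hc]; push_neg at hc; nlinarith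
  -- upper bounds on the gains inside R
  have hB3 : ∑ e ∈ R.powersetCard 2, c e * (1 - x0 e) ≤ ∑ e ∈ delta2 R' (R \ R'), c e := by
    have hsub : delta2 R' (R \ R') ⊆ R.powersetCard 2 := by
      intro e he
      obtain ⟨hep, p, hp, q, hq, rfl⟩ := Finset.mem_filter.mp he
      obtain ⟨hqR, hqR'⟩ := Finset.mem_sdiff.mp hq
      refine Finset.mem_powersetCard.mpr ⟨?_, mem_pairs_iff.mp hep⟩
      exact Finset.insert_subset (hR'sub hp) (Finset.singleton_subset_iff.mpr hqR)
    have heq : ∑ e ∈ delta2 R' (R \ R'), c e * (1 - x0 e) = ∑ e ∈ delta2 R' (R \ R'), c e := by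
      refine Finset.sum_congr rfl fun e he => ?_
      obtain ⟨hep, p, hp, q, hq, rfl⟩ := Finset.mem_filter.mp he
      obtain ⟨hqR, hqR'⟩ := Finset.mem_sdiff.mp hq
      rw [key p hp q hqR hqR']; ring
    have hnp : ∑ e ∈ R.powersetCard 2 \ delta2 R' (R \ R'), c e * (1 - x0 e) ≤ 0 := by
      refine Finset.sum_nonpos fun e he => ?_
      have heR := Finset.mem_sdiff.mp he |>.1
      have hc := hpair e heR
      obtain ⟨-, h1⟩ := hpairs01 e (hRp2sub heR)
      nlinarith
    have := Finset.sum_sdiff hsub (f := fun e => c e * (1 - x0 e))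
    linarith [heq ▸ this]
  have hB4 : ∑ t ∈ R.powersetCard 3, c t * (1 - ∏ e ∈ t.powersetCard 2, x0 e)
      ≤ ∑ t ∈ Tof (cut R') ∩ R.powersetCard 3, c t := by
    have hsub : Tof (cut R') ∩ R.powersetCard 3 ⊆ R.powersetCard 3 :=
      Finset.inter_subset_right
    have heq : ∑ t ∈ Tof (cut R') ∩ R.powersetCard 3, c t * (1 - ∏ e ∈ t.powersetCard 2, x0 e)
        = ∑ t ∈ Tof (cut R') ∩ R.powersetCard 3, c t := by
      refine Finset.sum_congr rfl fun t ht => ?_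
      obtain ⟨ht1, ht2⟩ := Finset.mem_inter.mp ht
      obtain ⟨e, hee, hec⟩ := (Finset.mem_filter.mp ht1).2
      obtain ⟨hep, hecard⟩ := Finset.mem_filter.mp hec
      -- e ∩ R' has exactly one element; write e = {a, b}
      obtain ⟨a, ha⟩ := Finset.card_eq_one.mp hecard
      have haR' : a ∈ R' := (Finset.mem_inter.mp (ha ▸ Finset.mem_singleton_self a)).2
      have hae : a ∈ e := (Finset.mem_inter.mp (ha ▸ Finset.mem_singleton_self a)).1
      have hesubR : e ⊆ R :=
        (Finset.mem_powersetCard.mp hee).1.trans (Finset.mem_powersetCard.mp ht2).1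
      obtain ⟨u, v, huv, heuv⟩ := Finset.card_eq_two.mp (mem_pairs_iff.mp hep)
      have hx0e : x0 e = 0 := by
        have hmem : ∀ w ∈ e, w ≠ a → w ∉ R' ∧ w ∈ R := by
          intro w hw hwa
          refine ⟨fun hwR' => ?_, hesubR hw⟩
          have : w ∈ e ∩ R' := Finset.mem_inter.mpr ⟨hw, hwR'⟩
          rw [ha] at this
          exact hwa (Finset.mem_singleton.mp this)
        rcases Finset.mem_insert.mp (heuv ▸ hae) with rfl | hav
        · -- a = u
          obtain ⟨hvR', hvR⟩ := hmem v (heuv ▸ mem_insert_of_mem (mem_singleton_self _))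
            (fun hEq => huv hEq.symm)
          rw [heuv]
          exact key a haR' v hvR hvR'
        · -- a = v
          have hav' : a = v := Finset.mem_singleton.mp hav
          subst hav'
          obtain ⟨huR', huR⟩ := hmem u (heuv ▸ mem_insert_self _ _) (fun hEq => huv hEq)
          rw [heuv, Finset.pair_comm]
          exact key a haR' u huR huR'
      rw [Finset.prod_eq_zero hee hx0e]; ring
    have hnp : ∑ t ∈ R.powersetCard 3 \ (Tof (cut R') ∩ R.powersetCard 3),
        c t * (1 - ∏ e ∈ t.powersetCard 2, x0 e) ≤ 0 := by
      refine Finset.sum_nonpos fun t ht => ?_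
      have htR := Finset.mem_sdiff.mp ht |>.1
      have hc := htriple t htR
      obtain ⟨-, h1⟩ := hprod01 t (hRp3sub htR)
      nlinarith
    have := Finset.sum_sdiff hsub (f := fun t => c t * (1 - ∏ e ∈ t.powersetCard 2, x0 e))
    linarith [heq ▸ this]
  -- put it together
  have hobj : obj c x' ≤ obj c x0 := by
    have hh := h R' hR'sub hR'nonempty hR'neR
    have hd2 : ∑ e ∈ pairs V, c e * x' e - ∑ e ∈ pairs V, c e * x0 e
        = ∑ e ∈ R.powersetCard 2, c e * (1 - x0 e) - ∑ e ∈ cut R, c e * x0 e := by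
      rw [← Finset.sum_sub_distrib]; exact claim2
    have hd3 : ∑ t ∈ triples V, c t * ∏ e ∈ t.powersetCard 2, x' e
        - ∑ t ∈ triples V, c t * ∏ e ∈ t.powersetCard 2, x0 e
        = ∑ t ∈ R.powersetCard 3, c t * (1 - ∏ e ∈ t.powersetCard 2, x0 e)
          - ∑ t ∈ Tof (cut R), c t * ∏ e ∈ t.powersetCard 2, x0 e := by
      rw [← Finset.sum_sub_distrib]; exact claim3
    unfold obj
    linarith
  refine ⟨x', hfeas, fun x hx => le_trans hobj (hopt x hx), fun e he => ?_⟩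
  exact hx'R e (Finset.mem_powersetCard.mp he).1
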